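/- Fix 0 < L < 1/2. For every t ∈ ℝ, the characteristic function of X_L satisfies E[exp(i t X_L)] = ∏_{m=0}^∞ e^{−i t a_{m,L}}/(1 − i·a_{m,L}·t), where the infinite product converges. -/

import Mathlib

/-! Writing `ζ = x + y i` with `x, y` independent of law `N(0, 1/2)`, the complex Gaussian integral
gives `E[exp(i s |ζ|²)] = 1 / (1 - i s)`, so by independence the partial sums of `X_L` have the
finite products as characteristic functions, and dominated convergence passes to the limit.
Log-convexity of `Γ` gives `a_m ≤ m^(L-1) / Γ(L)`, so `∑ a_m² < ∞` when `L < 1/2`; each factor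
being `1 + O(a_m² t²)`, the infinite product converges. -/

open MeasureTheory ProbabilityTheory Filter Complex

noncomputable section

/-- The law of a standard complex Gaussian: real and imaginary parts are independent
centered real Gaussians of variance `1/2`. -/
def stdCGaussian : Measure ℂ :=
  Measure.map (fun p : ℝ × ℝ => (p.1 : ℂ) + p.2 * Complex.I)
    ((gaussianReal 0 (1/2)).prod (gaussianReal 0 (1/2)))

-- Log-convexity of `Γ` at `x + L = (1 - L) * x + L * (x + 1)`.
lemma Real.Gamma_add_le_mul_rpow {x L : ℝ} (hx : 0 < x) (hL0 : 0 < L) (hL1 : L < 1) :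
    Real.Gamma (x + L) ≤ Real.Gamma x * x ^ L := by
  have h := Real.Gamma_mul_add_mul_le_rpow_Gamma_mul_rpow_Gamma hx (by linarith : 0 < x + 1)
    (sub_pos.2 hL1) hL0 (by ring)
  have hΓ := Real.Gamma_pos_of_pos hx
  rw [Real.Gamma_add_one hx.ne', Real.mul_rpow hx.le hΓ.le, mul_left_comm,
    ← Real.rpow_add hΓ, sub_add_cancel, Real.rpow_one] at h
  convert h using 1
  · congr 1; ring
  · ring

lemma Real.Gamma_add_div_factorial_le {L : ℝ} (hL0 : 0 < L) (hL1 : L < 1) {m : ℕ} (hm : m ≠ 0) :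
    Real.Gamma (L + m) / m.factorial ≤ (m : ℝ) ^ (L - 1) := by
  have hm0 : (0 : ℝ) < m := by positivity
  rw [← Real.Gamma_nat_eq_factorial, Real.Gamma_add_one hm0.ne', Real.rpow_sub_one hm0.ne',
    div_le_div_iff₀ (by positivity [Real.Gamma_pos_of_pos hm0]) hm0, add_comm]
  calc Real.Gamma (m + L) * m ≤ Real.Gamma m * m ^ L * m := by
        gcongr; exact Real.Gamma_add_le_mul_rpow hm0 hL0 hL1
    _ = m ^ L * (m * Real.Gamma m) := by ring

lemma summable_sq_Gamma_add_div {L : ℝ} (hL0 : 0 < L) (hL : L < 1 / 2) :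
    Summable fun m : ℕ => (Real.Gamma (L + m) / (Real.Gamma L * m.factorial)) ^ 2 := by
  have hΓ := Real.Gamma_pos_of_pos hL0
  have hg : Summable fun m : ℕ => (m : ℝ) ^ (2 * L - 2) / Real.Gamma L ^ 2 :=
    (Real.summable_nat_rpow.2 (by linarith)).div_const _
  refine hg.of_norm_bounded_eventually ?_
  filter_upwards [eventually_cofinite_ne 0] with m hm
  have hle := Real.Gamma_add_div_factorial_le hL0 (by linarith) hm
  have h0 : 0 ≤ Real.Gamma (L + m) / m.factorial :=
    div_nonneg (Real.Gamma_pos_of_pos (by positivity)).le (by positivity)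
  rw [Real.norm_eq_abs, abs_sq, mul_comm, ← div_div, div_pow,
    show (2 * L - 2) = (L - 1) * 2 by ring, Real.rpow_mul (Nat.cast_nonneg m), Real.rpow_two]
  gcongr

lemma norm_cexp_neg_I_mul_div_sub_one_le {r : ℝ} (hr : |r| ≤ 1) :
    ‖cexp (-I * r) / (1 - I * r) - 1‖ ≤ r ^ 2 := by
  have hden : 1 ≤ ‖1 - I * r‖ := by
    simpa using Complex.abs_re_le_norm (1 - I * r)
  have hden0 : 1 - I * r ≠ 0 := norm_pos_iff.1 (one_pos.trans_le hden)
  have hnum : ‖cexp (-I * r) - 1 - -I * r‖ ≤ r ^ 2 := by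
    have hIr : ‖-I * r‖ = |r| := by simp
    simpa [hIr] using Complex.norm_exp_sub_one_sub_id_le (hIr.trans_le hr)
  calc ‖cexp (-I * r) / (1 - I * r) - 1‖
      = ‖cexp (-I * r) - 1 - -I * r‖ / ‖1 - I * r‖ := by
        rw [div_sub_one hden0, norm_div]; ring_nf
    _ ≤ r ^ 2 / 1 := by gcongr
    _ = r ^ 2 := div_one _

lemma multipliable_cexp_neg_I_mul_div_of_summable_sq {ι : Type*} {a : ι → ℝ}
    (ha : Summable fun i => a i ^ 2) (t : ℝ) :
    Multipliable fun i => cexp (-I * t * a i) / (1 - I * a i * t) := by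
  have hsmall : ∀ᶠ i in cofinite, |a i * t| ≤ 1 := by
    have := (ha.mul_right (t ^ 2)).tendsto_cofinite_zero.eventually (eventually_le_nhds one_pos)
    filter_upwards [this] with i hi
    rwa [← mul_pow, sq_le_one_iff_abs_le_one] at hi
  have hsum : Summable fun i => ‖cexp (-I * t * a i) / (1 - I * a i * t) - 1‖ := by
    refine (ha.mul_right (t ^ 2)).of_norm_bounded_eventually ?_
    filter_upwards [hsmall] with i hi
    have hform : cexp (-I * t * a i) / (1 - I * a i * t)
        = cexp (-I * ↑(a i * t)) / (1 - I * ↑(a i * t)) := by push_cast; ring_nf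
    rw [norm_norm, ← mul_pow, hform]
    exact norm_cexp_neg_I_mul_div_sub_one_le hi
  simpa using multipliable_one_add_of_summable hsum

open Real in
lemma integral_cexp_mul_sq_mul_I_gaussianReal (s : ℝ) :
    ∫ x, cexp (s * x ^ 2 * I) ∂gaussianReal 0 (1 / 2)
      = (√π)⁻¹ * (π / (1 - s * I)) ^ (1 / 2 : ℂ) := by
  have hpdf : ∀ x, gaussianPDFReal 0 (1 / 2) x = (√π)⁻¹ * rexp (-x ^ 2) := by
    intro x
    rw [gaussianPDFReal]
    congr 3 <;> push_cast <;> ring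
  simp_rw [integral_gaussianReal_eq_integral_smul (by norm_num : (1 / 2 : NNReal) ≠ 0), hpdf,
    Complex.real_smul, ofReal_mul, mul_assoc, integral_const_mul, ofReal_exp, ← Complex.exp_add]
  rw [← integral_gaussian_complex (b := 1 - s * I) (by simp)]
  push_cast
  congr 2 with x
  ring_nf

lemma integral_cexp_mul_sq_norm_mul_I_stdCGaussian (s : ℝ) :
    ∫ z, cexp (s * ↑(‖z‖ ^ 2) * I) ∂stdCGaussian = (1 - s * I)⁻¹ := by
  have hsplit : ∀ p : ℝ × ℝ, cexp (s * ↑(‖(p.1 : ℂ) + p.2 * I‖ ^ 2) * I)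
      = cexp (s * p.1 ^ 2 * I) * cexp (s * p.2 ^ 2 * I) := by
    intro p
    rw [← Complex.exp_add, Complex.sq_norm, Complex.normSq_add_mul_I]
    push_cast
    ring_nf
  rw [stdCGaussian, integral_map (by fun_prop) (by fun_prop)]
  simp_rw [hsplit]
  rw [integral_prod_mul (f := fun x : ℝ => cexp (s * x ^ 2 * I))
    (g := fun x : ℝ => cexp (s * x ^ 2 * I)), integral_cexp_mul_sq_mul_I_gaussianReal,
    mul_mul_mul_comm, ← pow_two, ← pow_two, one_div, cpow_ofNat_inv_pow, ← ofReal_pow, inv_pow,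
    Real.sq_sqrt Real.pi_pos.le]
  have hπ : (Real.pi : ℂ) ≠ 0 := by exact_mod_cast Real.pi_ne_zero
  push_cast
  field_simp

lemma charFun_map_stdCGaussian_mul_sq_norm_sub_one (c t : ℝ) :
    charFun (stdCGaussian.map fun z => c * (‖z‖ ^ 2 - 1)) t
      = cexp (-I * t * c) / (1 - I * c * t) := by
  have hsplit : ∀ z : ℂ, cexp (t * ((c * (‖z‖ ^ 2 - 1) : ℝ) : ℂ) * I)
      = cexp (-I * t * c) * cexp ((t * c : ℝ) * ((‖z‖ ^ 2 : ℝ) : ℂ) * I) := by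
    intro z
    rw [← Complex.exp_add]
    push_cast
    ring_nf
  rw [charFun_apply_real, integral_map (by fun_prop) (by fun_prop)]
  simp_rw [hsplit]
  rw [integral_const_mul, integral_cexp_mul_sq_norm_mul_I_stdCGaussian, div_eq_mul_inv]
  push_cast
  ring_nf

instance isProbabilityMeasure_stdCGaussian : IsProbabilityMeasure stdCGaussian :=
  Measure.isProbabilityMeasure_map (by fun_prop)

lemma hasLaw_of_map_eq {Ω E : Type*} [MeasurableSpace Ω] [MeasurableSpace E] {P : Measure Ω}
    {μ : Measure E} [NeZero μ] {ζ : Ω → E} (h : P.map ζ = μ) : HasLaw ζ μ P where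
  aemeasurable := AEMeasurable.of_map_ne_zero (h ▸ NeZero.ne μ)
  map_eq := h

lemma integral_cexp_I_mul_sum_mul_sq_norm_sub_one {Ω ι : Type*} [MeasurableSpace Ω]
    {P : Measure Ω} [IsProbabilityMeasure P] {ζ : ι → Ω → ℂ} (hindep : iIndepFun ζ P)
    (hlaw : ∀ i, HasLaw (ζ i) stdCGaussian P) (a : ι → ℝ) (s : Finset ι) (t : ℝ) :
    ∫ ω, cexp (I * t * ((∑ i ∈ s, a i * (‖ζ i ω‖ ^ 2 - 1) : ℝ) : ℂ)) ∂P
      = ∏ i ∈ s, cexp (-I * t * a i) / (1 - I * a i * t) := by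
  set φ : ι → ℂ → ℝ := fun i z => a i * (‖z‖ ^ 2 - 1)
  have hφ : ∀ i, Measurable (φ i) := fun i => by fun_prop
  have hY : ∀ i, HasLaw (φ i ∘ ζ i) (stdCGaussian.map (φ i)) P := fun i =>
    HasLaw.comp ⟨(hφ i).aemeasurable, rfl⟩ (hlaw i)
  have hsum : ∫ ω, cexp (I * t * ((∑ i ∈ s, a i * (‖ζ i ω‖ ^ 2 - 1) : ℝ) : ℂ)) ∂P
      = charFun (P.map fun ω => ∑ i ∈ s, (φ i ∘ ζ i) ω) t := by
    rw [charFun_apply_real, integral_map (by fun_prop) (by fun_prop)]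
    congr with ω
    simp only [φ, Function.comp_apply]
    ring_nf
  rw [hsum, iIndepFun.charFun_map_fun_finsetSum_eq_prod (fun i _ => (hY i).aemeasurable)
    (iIndepFun_iff_finset.1 (hindep.comp φ hφ) s), Finset.prod_apply]
  exact Finset.prod_congr rfl fun i _ => by
    rw [(hY i).map_eq, charFun_map_stdCGaussian_mul_sq_norm_sub_one]

lemma tendsto_integral_cexp_I_mul_of_ae_tendsto {Ω : Type*} [MeasurableSpace Ω]
    {P : Measure Ω} [IsFiniteMeasure P] {S : ℕ → Ω → ℝ} {X : Ω → ℝ}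
    (hS : ∀ n, AEMeasurable (S n) P) (hX : ∀ᵐ ω ∂P, Tendsto (fun n => S n ω) atTop (nhds (X ω)))
    (t : ℝ) :
    Tendsto (fun n => ∫ ω, cexp (I * t * S n ω) ∂P) atTop (nhds (∫ ω, cexp (I * t * X ω) ∂P)) := by
  refine tendsto_integral_of_dominated_convergence (fun _ => 1)
    (fun n => by fun_prop) (integrable_const 1) (fun n => ae_of_all _ fun ω => ?_) ?_
  · rw [show I * t * S n ω = ↑(t * S n ω) * I by push_cast; ring, norm_exp_ofReal_mul_I]
  · filter_upwards [hX] with ω hω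
    exact ((by fun_prop : Continuous fun x : ℝ => cexp (I * t * x)).tendsto _).comp hω

theorem statement15_general
    {Ω : Type*} [MeasureSpace Ω] [IsProbabilityMeasure (ℙ : Measure Ω)]
    (ζ : ℕ → Ω → ℂ)
    (hindep : iIndepFun ζ ℙ)
    (hdist : ∀ m, Measure.map (ζ m) ℙ = stdCGaussian)
    (L : ℝ) (hL0 : 0 < L) (hL : L < 1/2)
    (a : ℕ → ℝ) (ha : ∀ m, a m = Real.Gamma (L + m) / (Real.Gamma L * m.factorial))
    (X : Ω → ℝ)
    (hX : ∀ᵐ ω, Tendsto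
      (fun N : ℕ => ∑ m ∈ Finset.range N, a m * (‖ζ m ω‖ ^ 2 - 1))
      atTop (nhds (X ω))) :
    ∀ t : ℝ,
      Multipliable (fun m : ℕ =>
        Complex.exp (-Complex.I * t * a m) / (1 - Complex.I * a m * t)) ∧
      (∫ ω, Complex.exp (Complex.I * t * X ω)) =
        ∏' m : ℕ, Complex.exp (-Complex.I * t * a m) / (1 - Complex.I * a m * t) := by
  intro t
  have hlaw m := hasLaw_of_map_eq (hdist m)
  have hmult := multipliable_cexp_neg_I_mul_div_of_summable_sq (a := a)
    (by simpa only [ha] using summable_sq_Gamma_add_div hL0 hL) t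
  refine ⟨hmult, tendsto_nhds_unique ?_ hmult.hasProd.tendsto_prod_nat⟩
  have hS N : AEMeasurable (fun ω => ∑ m ∈ Finset.range N, a m * (‖ζ m ω‖ ^ 2 - 1)) ℙ := by
    fun_prop
  simpa only [integral_cexp_I_mul_sum_mul_sq_norm_sub_one hindep hlaw] using
    tendsto_integral_cexp_I_mul_of_ae_tendsto hS hX t

/-- for fixed `0 < L < 1/2`, the characteristic function of `X_L` is
`E[e^{itX_L}] = ∏_m e^{−it a_{m,L}}/(1 − i a_{m,L} t)`, the infinite product converging. -/
theorem statement15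
    {Ω : Type*} [MeasureSpace Ω] [IsProbabilityMeasure (ℙ : Measure Ω)]
    (ζ : ℕ → Ω → ℂ) (hmeas : ∀ m, Measurable (ζ m))
    (hindep : iIndepFun ζ ℙ)
    (hdist : ∀ m, Measure.map (ζ m) ℙ = stdCGaussian)
    (L : ℝ) (hL0 : 0 < L) (hL : L < 1/2)
    (a : ℕ → ℝ) (ha : ∀ m, a m = Real.Gamma (L + m) / (Real.Gamma L * m.factorial))
    (X : Ω → ℝ)
    (hX : ∀ᵐ ω, Tendsto
      (fun N : ℕ => ∑ m ∈ Finset.range N, a m * (‖ζ m ω‖ ^ 2 - 1))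
      atTop (nhds (X ω))) :
    ∀ t : ℝ,
      Multipliable (fun m : ℕ =>
        Complex.exp (-Complex.I * t * a m) / (1 - Complex.I * a m * t)) ∧
      (∫ ω, Complex.exp (Complex.I * t * X ω)) =
        ∏' m : ℕ, Complex.exp (-Complex.I * t * a m) / (1 - Complex.I * a m * t) :=
  statement15_general ζ hindep hdist L hL0 hL a ha X hX
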